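/- arXiv:math/9411228 — 2 statements merged into one kernel-verified Lean document; each statement's English description precedes it below -/
import Mathlib

section
/- Let μ, ν, β be real numbers with μ > −1 and ν > μ + 1. Then ∫₀¹ x^μ (1−x)^{ν−μ−2} e^{−β x²} dx = B(ν−μ−1, μ+1) · ₂F₂((μ+1)/2, μ/2 + 1; ν/2, (ν+1)/2; −β). -/
open MeasureTheory Set

/-- Pochhammer symbol `(c)_n = c(c+1)⋯(c+n−1)` for a real `c`. -/
noncomputable def poch (c : ℝ) (n : ℕ) : ℝ := ∏ i ∈ Finset.range n, (c + i)

/-- The generalized hypergeometric series `₂F₂(a₁,a₂;b₁,b₂;z)`. -/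
noncomputable def hyp2F2 (a₁ a₂ b₁ b₂ z : ℝ) : ℝ :=
  ∑' n : ℕ, poch a₁ n * poch a₂ n / (poch b₁ n * poch b₂ n) * z ^ n / n.factorial

/-- The Beta function `B(x,y) = Γ(x)Γ(y)/Γ(x+y)`. -/
noncomputable def betaFn (x y : ℝ) : ℝ := Real.Gamma x * Real.Gamma y / Real.Gamma (x + y)

/-!
Expand `e^{-βx²}` in its power series and integrate term by term, which is legitimate because
`x^μ (1-x)^{ν-μ-2}` is integrable on `(0,1)` and `|βx²| ≤ |β|` there. The `n`-th term is a Beta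
integral `B(μ+1+2n, ν-μ-1) = B(ν-μ-1, μ+1) (μ+1)_{2n} / (ν)_{2n}`, and the duplication formula
`(c)_{2n} = 4ⁿ (c/2)_n ((c+1)/2)_n` turns this ratio into the coefficient of the ₂F₂ series.
-/

open scoped Nat

theorem integral_mul_exp_eq_tsum {α : Type*} [MeasurableSpace α] {m : Measure α} {g h : α → ℝ}
    {C : ℝ} (hg : Integrable g m) (hh : AEStronglyMeasurable h m) (hC : ∀ᵐ x ∂m, |h x| ≤ C) :
    ∫ x, g x * Real.exp (h x) ∂m = ∑' n : ℕ, ∫ x, g x * (h x ^ n / n !) ∂m := by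
  have hbound : ∀ n : ℕ, ∀ᵐ x ∂m, ‖g x * (h x ^ n / n !)‖ ≤ C ^ n / n ! * ‖g x‖ := by
    intro n
    filter_upwards [hC] with x hx
    rw [norm_mul, norm_div, norm_pow, Real.norm_natCast, mul_comm, Real.norm_eq_abs]
    gcongr
  have hint : ∀ n : ℕ, Integrable (fun x => g x * (h x ^ n / n !)) m := fun n =>
    (hg.norm.const_mul _).mono' (hg.aestronglyMeasurable.mul
      ((hh.aemeasurable.pow_const n).div_const _).aestronglyMeasurable) (hbound n)
  have hsum : Summable fun n : ℕ => ∫ x, ‖g x * (h x ^ n / n !)‖ ∂m := by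
    refine .of_nonneg_of_le (fun n => integral_nonneg fun x => norm_nonneg _) (fun n => ?_)
      ((Real.summable_pow_div_factorial C).mul_right (∫ x, ‖g x‖ ∂m))
    rw [← integral_const_mul]
    exact integral_mono_ae (hint n).norm (hg.norm.const_mul _) (hbound n)
  rw [integral_tsum_of_summable_integral_norm hint hsum]
  congr 1 with x
  rw [Real.exp_eq_exp_ℝ, NormedSpace.exp_eq_tsum_div, tsum_mul_left]

theorem poch_succ (c : ℝ) (n : ℕ) : poch c (n + 1) = poch c n * (c + n) :=
  Finset.prod_range_succ _ n

theorem poch_pos {c : ℝ} (hc : 0 < c) (n : ℕ) : 0 < poch c n :=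
  Finset.prod_pos fun i _ => by positivity

theorem Gamma_add_nat_eq_poch_mul {c : ℝ} (hc : 0 < c) (n : ℕ) :
    Real.Gamma (c + n) = poch c n * Real.Gamma c := by
  induction n with
  | zero => simp [poch]
  | succ n ih =>
    rw [Nat.cast_succ, ← add_assoc, Real.Gamma_add_one (by positivity), ih, poch_succ]
    ring

theorem poch_two_mul (c : ℝ) (n : ℕ) :
    poch c (2 * n) = 4 ^ n * poch (c / 2) n * poch ((c + 1) / 2) n := by
  induction n with
  | zero => simp [poch]
  | succ n ih =>
    rw [Nat.mul_succ, poch_succ, poch_succ, ih, poch_succ, poch_succ]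
    push_cast
    ring

theorem betaFn_comm (a b : ℝ) : betaFn a b = betaFn b a := by
  rw [betaFn, betaFn, mul_comm, add_comm]

theorem betaFn_add_nat {a b : ℝ} (ha : 0 < a) (hb : 0 < b) (n : ℕ) :
    betaFn (a + n) b = betaFn a b * (poch a n / poch (a + b) n) := by
  have hab : 0 < a + b := by positivity
  rw [betaFn, betaFn, add_right_comm, Gamma_add_nat_eq_poch_mul ha,
    Gamma_add_nat_eq_poch_mul hab]
  have := (poch_pos hab n).ne'
  have := (Real.Gamma_pos_of_pos hab).ne'
  field_simp

theorem Complex.betaIntegral_ofReal (a b : ℝ) :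
    Complex.betaIntegral a b = ((∫ x in Ioo (0:ℝ) 1, x ^ (a - 1) * (1 - x) ^ (b - 1) : ℝ) : ℂ) := by
  rw [Complex.betaIntegral, intervalIntegral.integral_of_le zero_le_one,
    integral_Ioc_eq_integral_Ioo, ← integral_complex_ofReal]
  refine setIntegral_congr_fun measurableSet_Ioo fun x hx => ?_
  rw [Complex.ofReal_mul, Complex.ofReal_cpow hx.1.le,
    Complex.ofReal_cpow (sub_nonneg.2 hx.2.le)]
  push_cast
  rfl

theorem integrableOn_rpow_mul_one_sub_rpow {a b : ℝ} (ha : -1 < a) (hb : -1 < b) :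
    IntegrableOn (fun x : ℝ => x ^ a * (1 - x) ^ b) (Ioo 0 1) := by
  have h := Complex.betaIntegral_convergent (u := ((a + 1 : ℝ) : ℂ)) (v := ((b + 1 : ℝ) : ℂ))
    (by simpa using by linarith) (by simpa using by linarith)
  rw [intervalIntegrable_iff_integrableOn_Ioc_of_le zero_le_one] at h
  have h2 : IntegrableOn (fun x : ℝ => ((x ^ a * (1 - x) ^ b : ℝ) : ℂ)) (Ioo 0 1) := by
    refine (h.mono_set Ioo_subset_Ioc_self).congr_fun (fun x hx => ?_) measurableSet_Ioo
    rw [Complex.ofReal_mul, Complex.ofReal_cpow hx.1.le,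
      Complex.ofReal_cpow (sub_nonneg.2 hx.2.le)]
    push_cast
    ring_nf
  simpa [IntegrableOn] using h2.re

theorem integral_rpow_mul_one_sub_rpow {a b : ℝ} (ha : 0 < a) (hb : 0 < b) :
    ∫ x in Ioo (0:ℝ) 1, x ^ (a - 1) * (1 - x) ^ (b - 1) = betaFn a b := by
  have h := Complex.Gamma_mul_Gamma_eq_betaIntegral (s := a) (t := b)
    (by simpa using ha) (by simpa using hb)
  rw [Complex.betaIntegral_ofReal, ← Complex.ofReal_add, Complex.Gamma_ofReal,
    Complex.Gamma_ofReal, Complex.Gamma_ofReal, ← Complex.ofReal_mul, ← Complex.ofReal_mul,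
    Complex.ofReal_inj] at h
  have := (Real.Gamma_pos_of_pos (add_pos ha hb)).ne'
  rw [betaFn, eq_div_iff this, h, mul_comm]

theorem integral_rpow_mul_one_sub_rpow_mul_pow {a b : ℝ} (ha : 0 < a) (hb : 0 < b) (n : ℕ) :
    ∫ x in Ioo (0:ℝ) 1, x ^ (a - 1) * (1 - x) ^ (b - 1) * x ^ n
      = betaFn a b * (poch a n / poch (a + b) n) := by
  calc ∫ x in Ioo (0:ℝ) 1, x ^ (a - 1) * (1 - x) ^ (b - 1) * x ^ n
      = ∫ x in Ioo (0:ℝ) 1, x ^ (a + n - 1) * (1 - x) ^ (b - 1) := by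
        refine setIntegral_congr_fun measurableSet_Ioo fun x hx => ?_
        rw [add_sub_right_comm, Real.rpow_add hx.1, Real.rpow_natCast]
        ring
    _ = _ := by rw [integral_rpow_mul_one_sub_rpow (by positivity) hb, betaFn_add_nat ha hb]

theorem poch_two_mul_div_poch_two_mul (c d : ℝ) (n : ℕ) :
    poch c (2 * n) / poch d (2 * n)
      = poch (c / 2) n * poch ((c + 1) / 2) n / (poch (d / 2) n * poch ((d + 1) / 2) n) := by
  rw [poch_two_mul, poch_two_mul, mul_assoc, mul_assoc,
    mul_div_mul_left _ _ (pow_ne_zero n four_ne_zero)]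

/-- For `μ > −1` and `ν > μ + 1`:
`∫₀¹ x^μ (1−x)^{ν−μ−2} e^{−βx²} dx = B(ν−μ−1,μ+1) ₂F₂((μ+1)/2,μ/2+1;ν/2,(ν+1)/2;−β)`. -/
theorem integral_beta_exp_sq (μ ν β : ℝ) (hμ : -1 < μ) (hν : μ + 1 < ν) :
    ∫ x in Ioo (0:ℝ) 1, x ^ μ * (1 - x) ^ (ν - μ - 2) * Real.exp (-(β * x ^ 2))
      = betaFn (ν - μ - 1) (μ + 1) *
          hyp2F2 ((μ + 1) / 2) (μ / 2 + 1) (ν / 2) ((ν + 1) / 2) (-β) := by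
  have ha : 0 < μ + 1 := by linarith
  have hb : 0 < ν - μ - 1 := by linarith
  have hbound : ∀ᵐ x ∂(volume.restrict (Ioo (0:ℝ) 1)), |-(β * x ^ 2)| ≤ |β| := by
    refine (ae_restrict_iff' measurableSet_Ioo).2 (ae_of_all _ fun x hx => ?_)
    rw [abs_neg, abs_mul, abs_of_pos (pow_pos hx.1 2)]
    exact mul_le_of_le_one_right (abs_nonneg β) (pow_le_one₀ hx.1.le hx.2.le)
  rw [integral_mul_exp_eq_tsum (integrableOn_rpow_mul_one_sub_rpow hμ (by linarith))
    (by fun_prop) hbound, hyp2F2, ← tsum_mul_left]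
  refine tsum_congr fun n => ?_
  calc ∫ x in Ioo (0:ℝ) 1, x ^ μ * (1 - x) ^ (ν - μ - 2) * ((-(β * x ^ 2)) ^ n / n !)
      = (-β) ^ n / n ! *
          ∫ x in Ioo (0:ℝ) 1, x ^ (μ + 1 - 1) * (1 - x) ^ (ν - μ - 1 - 1) * x ^ (2 * n) := by
        rw [← integral_const_mul]
        congr 1 with x
        ring_nf
    _ = _ := by
        rw [integral_rpow_mul_one_sub_rpow_mul_pow ha hb, betaFn_comm,
          show μ + 1 + (ν - μ - 1) = ν by ring, poch_two_mul_div_poch_two_mul,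
          show (μ + 1 + 1) / 2 = μ / 2 + 1 by ring]
        ring
end

section
/- Let a > 0, b > 0 and s > 0. Then ∫₀¹ x^{−1} (a x + b(1−x))^{−1} · sin(2 √(s x / (a x + b(1−x)))) dx = (2/b) · Si(2 √(s/a)), where Si is the sine integral. -/
/-!
Substitute `t = 2 √(s x / (a x + b (1 - x)))`. It increases from `0` at `x = 0` to `2 √(s / a)`
at `x = 1`, and its logarithmic derivative is `b / (2 x (a x + b (1 - x)))`, so
`dx / (x (a x + b (1 - x))) = (2 / b) dt / t`.
-/

open MeasureTheory Set

noncomputable def Si (z : ℝ) : ℝ := ∫ t in (0:ℝ)..z, Real.sin t / t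

lemma mul_add_mul_one_sub_pos {a b x : ℝ} (ha : 0 < a) (hb : 0 < b) (hx : x ∈ Icc (0:ℝ) 1) :
    0 < a * x + b * (1 - x) := by
  obtain ⟨h0, h1⟩ := hx
  rcases le_total a b with h | h <;> nlinarith

lemma hasDerivAt_mul_div_mul_add_mul_one_sub {a b s x : ℝ} (hx : a * x + b * (1 - x) ≠ 0) :
    HasDerivAt (fun y => s * y / (a * y + b * (1 - y))) (s * b / (a * x + b * (1 - x)) ^ 2) x := by
  have hnum : HasDerivAt (fun y => s * y) s x := by simpa using (hasDerivAt_id x).const_mul s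
  have hden : HasDerivAt (fun y => a * y + b * (1 - y)) (a - b) x :=
    (((hasDerivAt_id x).const_mul a).add
      (((hasDerivAt_id x).const_sub 1).const_mul b)).congr_deriv (by ring)
  refine (hnum.div hden hx).congr_deriv ?_
  field_simp
  ring

noncomputable def feynmanSubst (a b s x : ℝ) : ℝ :=
  2 * Real.sqrt (s * x / (a * x + b * (1 - x)))

section feynmanSubst

variable {a b s : ℝ}

@[simp] lemma feynmanSubst_zero : feynmanSubst a b s 0 = 0 := by simp [feynmanSubst]

@[simp] lemma feynmanSubst_one : feynmanSubst a b s 1 = 2 * Real.sqrt (s / a) := by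
  simp [feynmanSubst]

lemma feynmanSubst_pos (ha : 0 < a) (hb : 0 < b) (hs : 0 < s) {x : ℝ} (hx : x ∈ Ioo (0:ℝ) 1) :
    0 < feynmanSubst a b s x := by
  have hD := mul_add_mul_one_sub_pos ha hb (Ioo_subset_Icc_self hx)
  have hx0 := hx.1
  unfold feynmanSubst
  positivity

lemma continuousOn_feynmanSubst (ha : 0 < a) (hb : 0 < b) :
    ContinuousOn (feynmanSubst a b s) (Icc 0 1) :=
  continuousOn_const.mul <| ContinuousOn.sqrt <| ContinuousOn.div (by fun_prop) (by fun_prop)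
    fun _ hx => (mul_add_mul_one_sub_pos ha hb hx).ne'

lemma hasDerivAt_feynmanSubst (ha : 0 < a) (hb : 0 < b) (hs : 0 < s) {x : ℝ}
    (hx : x ∈ Ioo (0:ℝ) 1) :
    HasDerivAt (feynmanSubst a b s)
      (b * feynmanSubst a b s x / (2 * x * (a * x + b * (1 - x)))) x := by
  have hD := mul_add_mul_one_sub_pos ha hb (Ioo_subset_Icc_self hx)
  have hu : 0 < s * x / (a * x + b * (1 - x)) := div_pos (mul_pos hs hx.1) hD
  have hsq := Real.sq_sqrt hu.le
  refine (((hasDerivAt_mul_div_mul_add_mul_one_sub hD.ne').sqrt hu.ne').const_mul 2).congr_deriv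
    ?_
  rw [feynmanSubst]
  field_simp
  rw [hsq, mul_div_cancel₀ _ hD.ne', mul_div_cancel_right₀ _ hx.1.ne']

end feynmanSubst

/-- For `a,b,s > 0`:
`∫₀¹ x^{−1}(ax+b(1−x))^{−1} sin(2√(sx/(ax+b(1−x)))) dx = (2/b) Si(2√(s/a))`. -/
theorem feynman_sin_integral (a b s : ℝ) (ha : 0 < a) (hb : 0 < b) (hs : 0 < s) :
    ∫ x in Ioo (0:ℝ) 1,
        x⁻¹ * (a * x + b * (1 - x))⁻¹ *
          Real.sin (2 * Real.sqrt (s * x / (a * x + b * (1 - x))))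
      = 2 / b * Si (2 * Real.sqrt (s / a)) := by
  have hD (x : ℝ) (hx : x ∈ Ioo (0:ℝ) 1) : 0 < a * x + b * (1 - x) :=
    mul_add_mul_one_sub_pos ha hb (Ioo_subset_Icc_self hx)
  have hsubst := intervalIntegral.integral_comp_mul_deriv_of_deriv_nonneg (a := 0) (b := 1)
    (g := fun t => 2 / b * (Real.sin t / t))
    (by simpa using continuousOn_feynmanSubst (s := s) ha hb)
    (fun x hx => hasDerivAt_feynmanSubst ha hb hs (by simpa using hx))
    (fun x hx => by
      replace hx : x ∈ Ioo (0:ℝ) 1 := by simpa using hx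
      have := hx.1
      have := hD x hx
      have := feynmanSubst_pos ha hb hs hx
      positivity)
  rw [feynmanSubst_zero, feynmanSubst_one, intervalIntegral.integral_const_mul] at hsubst
  rw [Si, ← hsubst, intervalIntegral.integral_of_le zero_le_one, integral_Ioc_eq_integral_Ioo]
  refine setIntegral_congr_fun measurableSet_Ioo fun x hx => ?_
  have := (feynmanSubst_pos ha hb hs hx).ne'
  have := hx.1.ne'
  have := (hD x hx).ne'
  change x⁻¹ * (a * x + b * (1 - x))⁻¹ * Real.sin (feynmanSubst a b s x) = _
  rw [Function.comp_apply]
  field_simp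
end
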